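/- arXiv:2503.04536 — 9 statements merged into one kernel-verified Lean document; each statement's English description precedes it below -/
import Mathlib

section
/- Let (D,d) and (D*,d*) be compact metric spaces, c : D × D* → ℝ a Lipschitz cost, and μ a Borel measure on D such that c satisfies condition (SV) with respect to μ. Then for every c-concave function φ : D → ℝ the multivalued map ∂_cφ is μ-measurable; that is, for every Borel set F ⊆ D* the set (∂_cφ)^{-1}(F) = { x ∈ D : ∂_cφ(x) ∩ F ≠ ∅ } is measurable with respect to the completion of μ (it differs from a Borel subset of D by a set of μ-measure zero). -/
open MeasureTheory

/-- The `c`-transform of a function `u : D → ℝ`: `u^c(m) = inf_{x ∈ D} (c(x,m) − u(x))`. -/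
noncomputable def cTransform {D D' : Type*} (c : D → D' → ℝ) (u : D → ℝ) (m : D') : ℝ :=
  ⨅ x : D, (c x m - u x)

/-- A function `φ : D → ℝ` is `c`-concave if for every `x₀ ∈ D` there are `m₀ ∈ D*` and
`b ∈ ℝ` with `φ(x) ≤ c(x,m₀) − b` for all `x`, with equality at `x₀`. -/
def CConcave {D D' : Type*} (c : D → D' → ℝ) (φ : D → ℝ) : Prop :=
  ∀ x₀ : D, ∃ m₀ : D', ∃ b : ℝ, (∀ x : D, φ x ≤ c x m₀ - b) ∧ φ x₀ = c x₀ m₀ - b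

/-- The `c`-superdifferential `∂_cφ(x) = { m ∈ D* : φ(x) + φ^c(m) = c(x,m) }`. -/
noncomputable def cSuperdiff {D D' : Type*} (c : D → D' → ℝ) (φ : D → ℝ) (x : D) : Set D' :=
  {m : D' | φ x + cTransform c φ m = c x m}

/-- Let `(D,d)`, `(D*,d*)` be compact metric spaces, `c` a Lipschitz cost and `μ`
a Borel measure on `D` such that `c` satisfies condition (SV) with respect to `μ` (for every
`c`-concave `φ`, the set where `∂_cφ` is not a singleton is `μ`-null).  Then for every
`c`-concave `φ : D → ℝ` and every Borel set `F ⊆ D*`, the set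
`(∂_cφ)⁻¹(F) = { x ∈ D : ∂_cφ(x) ∩ F ≠ ∅ }` is measurable with respect to the completion of
`μ`, i.e. it differs from a Borel set by a `μ`-null set (`NullMeasurableSet`). -/
theorem cSuperdiff_measurable
    {D D' : Type*} [MetricSpace D] [CompactSpace D] [MetricSpace D'] [CompactSpace D']
    [MeasurableSpace D] [BorelSpace D] [MeasurableSpace D'] [BorelSpace D']
    (c : D → D' → ℝ) (K : ℝ) (hK : 0 < K)
    (hLip : ∀ x₁ x₂ : D, ∀ y₁ y₂ : D',
      |c x₁ y₁ - c x₂ y₂| ≤ K * (dist x₁ x₂ + dist y₁ y₂))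
    (μ : Measure D)
    (hSV : ∀ φ : D → ℝ, CConcave c φ →
      μ {x : D | ¬ ∃ m : D', cSuperdiff c φ x = {m}} = 0)
    (φ : D → ℝ) (hφ : CConcave c φ)
    (F : Set D') (hF : MeasurableSet F) :
    NullMeasurableSet {x : D | (cSuperdiff c φ x ∩ F).Nonempty} μ := by
  classical
  -- Trivial case: `D` empty.
  rcases isEmpty_or_nonempty D with hD | hD
  · have : {x : D | (cSuperdiff c φ x ∩ F).Nonempty} = (∅ : Set D) :=
      Set.eq_empty_of_isEmpty _
    rw [this]
    exact (MeasurableSet.empty).nullMeasurableSet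
  -- `c` is continuous.
  have hc_cont : Continuous (fun p : D × D' => c p.1 p.2) := by
    rw [Metric.continuous_iff]
    intro p ε hε
    refine ⟨ε / (2 * K), by positivity, fun q hq => ?_⟩
    have h1 : |c q.1 q.2 - c p.1 p.2| ≤ K * (dist q.1 p.1 + dist q.2 p.2) :=
      hLip _ _ _ _
    have h2 : dist q.1 p.1 ≤ dist q p := le_max_left _ _
    have h3 : dist q.2 p.2 ≤ dist q p := le_max_right _ _
    have : K * (dist q.1 p.1 + dist q.2 p.2) ≤ K * (2 * dist q p) := by
      apply mul_le_mul_of_nonneg_left _ hK.le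
      linarith
    rw [Real.dist_eq]
    calc |c q.1 q.2 - c p.1 p.2| ≤ K * (2 * dist q p) := h1.trans this
      _ < K * (2 * (ε / (2 * K))) := by
          apply mul_lt_mul_of_pos_left _ hK
          apply mul_lt_mul_of_pos_left hq (by norm_num)
      _ = ε := by field_simp
  -- `φ` is continuous (it is `K`-Lipschitz).
  have hφ_lip : ∀ x y : D, φ x - φ y ≤ K * dist x y := by
    intro x y
    obtain ⟨m, b, hle, heq⟩ := hφ y
    have h1 : φ x ≤ c x m - b := hle x
    have h2 : c x m - c y m ≤ |c x m - c y m| := le_abs_self _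
    have h3 : |c x m - c y m| ≤ K * (dist x y + dist m m) := hLip _ _ _ _
    simp only [dist_self, add_zero] at h3
    linarith
  have hφ_cont : Continuous φ := by
    rw [Metric.continuous_iff]
    intro x ε hε
    refine ⟨ε / K, by positivity, fun y hy => ?_⟩
    rw [Real.dist_eq, abs_sub_lt_iff]
    have h1 := hφ_lip y x
    have h2 := hφ_lip x y
    have h3 : K * dist y x < K * (ε / K) := mul_lt_mul_of_pos_left hy hK
    rw [mul_div_cancel₀ _ hK.ne'] at h3
    rw [dist_comm] at hy
    have h4 : K * dist x y < ε := by
      have := mul_lt_mul_of_pos_left hy hK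
      rwa [mul_div_cancel₀ _ hK.ne'] at this
    constructor <;> linarith
  -- Each family `x ↦ c x m - φ x` is bounded below.
  have hbdd : ∀ m : D', BddBelow (Set.range fun x : D => c x m - φ x) := by
    intro m
    have hcont : Continuous fun x : D => c x m - φ x :=
      (hc_cont.comp (Continuous.prodMk_left m)).sub hφ_cont
    exact (isCompact_range hcont).bddBelow
  -- `cTransform c φ` is continuous.
  have hT_cont : Continuous (cTransform c φ) := by
    have key : ∀ m₁ m₂ : D', cTransform c φ m₁ - cTransform c φ m₂ ≤ K * dist m₁ m₂ := by
      intro m₁ m₂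
      have : ∀ x : D, cTransform c φ m₁ ≤ c x m₂ - φ x + K * dist m₁ m₂ := by
        intro x
        have h1 : cTransform c φ m₁ ≤ c x m₁ - φ x := ciInf_le (hbdd m₁) x
        have h2 : c x m₁ - c x m₂ ≤ |c x m₁ - c x m₂| := le_abs_self _
        have h3 : |c x m₁ - c x m₂| ≤ K * (dist x x + dist m₁ m₂) := hLip _ _ _ _
        simp only [dist_self, zero_add] at h3
        linarith
      have h4 : cTransform c φ m₁ - K * dist m₁ m₂ ≤ cTransform c φ m₂ := by
        apply le_ciInf
        intro x
        linarith [this x]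
      linarith
    rw [Metric.continuous_iff]
    intro m ε hε
    refine ⟨ε / K, by positivity, fun m' hm' => ?_⟩
    rw [Real.dist_eq, abs_sub_lt_iff]
    have h1 := key m' m
    have h2 := key m m'
    rw [dist_comm m m'] at h2
    have h3 : K * dist m' m < ε := by
      have := mul_lt_mul_of_pos_left hm' hK
      rwa [mul_div_cancel₀ _ hK.ne'] at this
    constructor <;> linarith
  -- The "contact set" is closed.
  set E : Set (D × D') := {p : D × D' | φ p.1 + cTransform c φ p.2 = c p.1 p.2} with hE
  have hE_closed : IsClosed E := by
    have : E = (fun p : D × D' => φ p.1 + cTransform c φ p.2 - c p.1 p.2) ⁻¹' {0} := by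
      ext p; simp [hE, sub_eq_zero]
    rw [this]
    exact IsClosed.preimage
      (((hφ_cont.comp continuous_fst).add (hT_cont.comp continuous_snd)).sub hc_cont)
      isClosed_singleton
  -- `cSuperdiff c φ x` is nonempty for all `x`.
  have hne : ∀ x : D, (cSuperdiff c φ x).Nonempty := by
    intro x
    obtain ⟨m, b, hle, heq⟩ := hφ x
    refine ⟨m, ?_⟩
    have hb : cTransform c φ m = b := by
      apply le_antisymm
      · have h1 : cTransform c φ m ≤ c x m - φ x := ciInf_le (hbdd m) x
        linarith
      · apply le_ciInf
        intro y
        linarith [hle y]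
    simp only [cSuperdiff, Set.mem_setOf_eq, hb]
    linarith
  -- Bad and good sets.
  set Bad : Set D := {x : D | ¬ ∃ m : D', cSuperdiff c φ x = {m}} with hBadDef
  have hBad : μ Bad = 0 := hSV φ hφ
  set Good : Set D := Badᶜ with hGoodDef
  have hGood_nm : NullMeasurableSet Good μ :=
    (NullMeasurableSet.of_null hBad).compl
  -- the preimage map
  set A : Set D' → Set D := fun G => {x : D | (cSuperdiff c φ x ∩ G).Nonempty} with hA
  -- Key: `Good ∩ A G` is null-measurable for every Borel `G`.
  have key : ∀ G : Set D', MeasurableSet G → NullMeasurableSet (Good ∩ A G) μ := by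
    have hgen : (‹_› : MeasurableSpace D') =
        MeasurableSpace.generateFrom {s : Set D' | IsClosed s} := by
      rw [BorelSpace.measurable_eq (α := D'), borel_eq_generateFrom_isClosed]
    intro G hG
    rw [hgen] at hG
    induction hG with
    | basic t ht =>
        -- `t` closed: `A t` is the projection of a compact set, hence closed.
        have hAt : A t = Prod.fst '' (E ∩ (Set.univ ×ˢ t)) := by
          ext x
          simp only [hA, Set.mem_setOf_eq, Set.mem_image, Set.mem_inter_iff,
            Set.mem_prod, Set.mem_univ, true_and]
          constructor
          · rintro ⟨m, hm, hmt⟩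
            exact ⟨(x, m), ⟨hm, hmt⟩, rfl⟩
          · rintro ⟨⟨x', m⟩, ⟨hm, hmt⟩, rfl⟩
            exact ⟨m, hm, hmt⟩
        have hclosed : IsClosed (A t) := by
          rw [hAt]
          have hcpt : IsCompact (E ∩ (Set.univ ×ˢ t)) :=
            (hE_closed.inter ((isClosed_univ.prod ht))).isCompact
          exact (hcpt.image continuous_fst).isClosed
        exact hGood_nm.inter hclosed.measurableSet.nullMeasurableSet
    | empty =>
        have : A ∅ = ∅ := by
          ext x; simp [hA]
        simp only [this, Set.inter_empty]
        exact (MeasurableSet.empty).nullMeasurableSet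
    | compl t ht iht =>
        have : Good ∩ A tᶜ = Good \ (Good ∩ A t) := by
          ext x
          simp only [Set.mem_inter_iff, Set.mem_diff, hA, Set.mem_setOf_eq, hGoodDef,
            Set.mem_compl_iff, hBadDef, Set.mem_setOf_eq, not_not]
          constructor
          · rintro ⟨hx, hne'⟩
            obtain ⟨m, hm⟩ := hx
            refine ⟨⟨m, hm⟩, ?_⟩
            rintro ⟨-, m', hm'1, hm'2⟩
            rw [hm, Set.mem_singleton_iff] at hm'1
            obtain ⟨m'', hm''1, hm''2⟩ := hne'
            rw [hm, Set.mem_singleton_iff] at hm''1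
            subst hm'1; subst hm''1
            exact hm''2 hm'2
          · rintro ⟨hx, hnmem⟩
            refine ⟨hx, ?_⟩
            obtain ⟨m, hm⟩ := hx
            refine ⟨m, by rw [hm]; exact rfl, fun hmt => ?_⟩
            exact hnmem ⟨⟨m, hm⟩, m, by rw [hm]; exact rfl, hmt⟩
        rw [this]
        exact hGood_nm.diff iht
    | iUnion f hf ihf =>
        have : Good ∩ A (⋃ i, f i) = ⋃ i, Good ∩ A (f i) := by
          ext x
          simp only [Set.mem_inter_iff, Set.mem_iUnion, hA, Set.mem_setOf_eq,
            Set.inter_iUnion, Set.nonempty_iUnion]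
          tauto
        rw [this]
        exact NullMeasurableSet.iUnion ihf
  -- Conclusion.
  have hsplit : A F = (A F ∩ Bad) ∪ (Good ∩ A F) := by
    ext x
    by_cases hx : x ∈ Bad
    · simp [hx]
    · simp [hx, hGoodDef, Set.mem_compl_iff, and_comm]
  show NullMeasurableSet (A F) μ
  rw [hsplit]
  exact (NullMeasurableSet.of_null
    (measure_mono_null Set.inter_subset_right hBad)).union (key F hF)
end

section
/- Let Ω₀ and Ω₁ be compact subsets of ℝⁿ with |∂Ω₀| = 0 (Lebesgue measure), and let c : Ω₀ × Ω₁ → ℝ be C¹. If for each x ∈ Ω₀ the map Ω₁ ∋ y ↦ ∇ₓc(x,y) is injective, then for every c-concave function φ : Ω₀ → ℝ the set { x ∈ Ω₀ : ∂_cφ(x) is not a singleton } has Lebesgue measure zero; i.e., c satisfies condition (SV) with μ equal to Lebesgue measure on Ω₀. -/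
/-!
A `c`-concave `φ` is an infimum of translates of the functions `c(·, m)`, which are uniformly
Lipschitz because `c` is `C¹` on a compact set; so `φ` is Lipschitz and, by Rademacher's
theorem, differentiable at almost every interior point of `Ω₀`. If `m ∈ ∂_cφ(x)`, then
`c(·, m) - φ` attains its minimum `φ^c(m)` over `Ω₀` at `x`, so at an interior point of
differentiability `∇ₓc(x, m) = ∇φ(x)`, and injectivity of `m ↦ ∇ₓc(x, m)` leaves at most one
such `m`. A supporting function of `φ` at `x` provides one, so `∂_cφ(x)` can fail to be a
singleton only on `∂Ω₀` or off the differentiability set, both null.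
-/

open MeasureTheory

/-- The `c`-transform relative to the domain `Ω₀`:
`u^c(m) = inf_{x ∈ Ω₀} (c(x,m) − u(x))`. -/
noncomputable def cTransformOn {E : Type*} (Ω₀ : Set E) (c : E → E → ℝ) (u : E → ℝ)
    (m : E) : ℝ :=
  ⨅ x : Ω₀, (c x m - u x)

/-- `φ` is `c`-concave on `Ω₀` (relative to the target `Ω₁`). -/
def CConcaveOn {E : Type*} (Ω₀ Ω₁ : Set E) (c : E → E → ℝ) (φ : E → ℝ) : Prop :=
  ∀ x₀ ∈ Ω₀, ∃ m₀ ∈ Ω₁, ∃ b : ℝ, (∀ x ∈ Ω₀, φ x ≤ c x m₀ - b) ∧ φ x₀ = c x₀ m₀ - b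

/-- The `c`-superdifferential `∂_cφ(x) = { m ∈ Ω₁ : φ(x) + φ^c(m) = c(x,m) }`. -/
noncomputable def cSuperdiffOn {E : Type*} (Ω₀ Ω₁ : Set E) (c : E → E → ℝ) (φ : E → ℝ)
    (x : E) : Set E :=
  {m ∈ Ω₁ | φ x + cTransformOn Ω₀ c φ m = c x m}

open Set Filter Topology

section Generic

variable {E : Type*} {Ω₀ Ω₁ : Set E} {c : E → E → ℝ} {φ : E → ℝ}

theorem cTransformOn_le {m x : E} (hx : x ∈ Ω₀)
    (hbdd : BddBelow ((fun x => c x m - φ x) '' Ω₀)) :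
    cTransformOn Ω₀ c φ m ≤ c x m - φ x :=
  ciInf_le (by rwa [image_eq_range] at hbdd) (⟨x, hx⟩ : Ω₀)

theorem cTransformOn_eq_of_le_of_eq {m x₀ : E} {b : ℝ} (hle : ∀ x ∈ Ω₀, φ x ≤ c x m - b)
    (hx₀ : x₀ ∈ Ω₀) (heq : φ x₀ = c x₀ m - b) : cTransformOn Ω₀ c φ m = b := by
  have : Nonempty Ω₀ := ⟨⟨x₀, hx₀⟩⟩
  refine le_antisymm ?_ (le_ciInf fun x => by linarith [hle x x.2])
  calc cTransformOn Ω₀ c φ m ≤ c x₀ m - φ x₀ :=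
        cTransformOn_le hx₀ ⟨b, forall_mem_image.2 fun x hx => by linarith [hle x hx]⟩
    _ = b := by linarith

theorem CConcaveOn.nonempty_cSuperdiffOn (hφ : CConcaveOn Ω₀ Ω₁ c φ) {x : E} (hx : x ∈ Ω₀) :
    (cSuperdiffOn Ω₀ Ω₁ c φ x).Nonempty := by
  obtain ⟨m, hm, b, hle, heq⟩ := hφ x hx
  refine ⟨m, hm, ?_⟩
  rw [cTransformOn_eq_of_le_of_eq hle hx heq]
  linarith

end Generic

theorem CConcaveOn.lipschitzOnWith {E : Type*} [PseudoMetricSpace E] {Ω₀ Ω₁ : Set E}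
    {c : E → E → ℝ} {φ : E → ℝ} {K : NNReal} (hφ : CConcaveOn Ω₀ Ω₁ c φ)
    (hc : ∀ m ∈ Ω₁, LipschitzOnWith K (fun x => c x m) Ω₀) : LipschitzOnWith K φ Ω₀ := by
  refine LipschitzOnWith.of_le_add_mul K fun x hx y hy => ?_
  obtain ⟨m, hm, b, hle, heq⟩ := hφ y hy
  linarith [hle x hx, (hc m hm).le_add_mul hx hy]

theorem ContDiff.exists_lipschitzOnWith_uncurry_left {E F : Type*} [NormedAddCommGroup E]
    [NormedSpace ℝ E] [ProperSpace E] [NormedAddCommGroup F] [NormedSpace ℝ F] [ProperSpace F]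
    {c : E → F → ℝ} (hc : ContDiff ℝ 1 (Function.uncurry c)) {Ω₀ : Set E} {Ω₁ : Set F}
    (hΩ₀ : Bornology.IsBounded Ω₀) (hΩ₁ : Bornology.IsBounded Ω₁) :
    ∃ K, ∀ m ∈ Ω₁, LipschitzOnWith K (fun x => c x m) Ω₀ := by
  obtain ⟨R₀, hR₀⟩ := hΩ₀.subset_closedBall 0
  obtain ⟨R₁, hR₁⟩ := hΩ₁.subset_closedBall 0
  obtain ⟨K, hK⟩ := hc.contDiffOn.exists_lipschitzOnWith one_ne_zero
    ((convex_closedBall 0 R₀).prod (convex_closedBall 0 R₁))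
    ((isCompact_closedBall 0 R₀).prod (isCompact_closedBall 0 R₁))
  refine ⟨K, fun m hm => ?_⟩
  simpa [Function.comp_def] using hK.comp (LipschitzWith.prodMk_right m).lipschitzOnWith
    fun x hx => mk_mem_prod (hR₀ hx) (hR₁ hm)

section Differentiable

variable {E : Type*} [NormedAddCommGroup E] {Ω₀ Ω₁ : Set E} {c : E → E → ℝ} {φ : E → ℝ}

theorem hasFDerivAt_eq_of_mem_cSuperdiffOn [NormedSpace ℝ E] {x m : E} {L φ' : E →L[ℝ] ℝ}
    (hx : x ∈ interior Ω₀) (hm : m ∈ cSuperdiffOn Ω₀ Ω₁ c φ x)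
    (hbdd : BddBelow ((fun x => c x m - φ x) '' Ω₀))
    (hc : HasFDerivAt (fun x => c x m) L x) (hφ : HasFDerivAt φ φ' x) : L = φ' := by
  have hmin : IsLocalMin (fun y => c y m - φ y) x := by
    filter_upwards [mem_interior_iff_mem_nhds.1 hx] with y hy
    linarith [hm.2, cTransformOn_le hy hbdd]
  exact sub_eq_zero.1 (hmin.hasFDerivAt_eq_zero (hc.sub hφ))

theorem subsingleton_cSuperdiffOn [InnerProductSpace ℝ E] [CompleteSpace E] {x : E}
    (hx : x ∈ interior Ω₀) (hφ : DifferentiableAt ℝ φ x)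
    (hc : ∀ m ∈ Ω₁, DifferentiableAt ℝ (fun x => c x m) x)
    (hbdd : ∀ m ∈ Ω₁, BddBelow ((fun x => c x m - φ x) '' Ω₀))
    (hinj : InjOn (fun m => gradient (fun x => c x m) x) Ω₁) :
    (cSuperdiffOn Ω₀ Ω₁ c φ x).Subsingleton := by
  have hgrad : ∀ m ∈ cSuperdiffOn Ω₀ Ω₁ c φ x, fderiv ℝ (fun x => c x m) x = fderiv ℝ φ x :=
    fun m hm => hasFDerivAt_eq_of_mem_cSuperdiffOn hx hm (hbdd m hm.1)
      (hc m hm.1).hasFDerivAt hφ.hasFDerivAt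
  intro m hm m' hm'
  exact hinj hm.1 hm'.1 (by simp only [gradient, hgrad m hm, hgrad m' hm'])

end Differentiable

/-- Let `Ω₀, Ω₁ ⊆ ℝⁿ` be compact with `|∂Ω₀| = 0` and let `c` be `C¹`.  If for
each `x ∈ Ω₀` the map `y ↦ ∇ₓc(x,y)` is injective on `Ω₁`, then for every `c`-concave `φ`
the set `{ x ∈ Ω₀ : ∂_cφ(x) is not a singleton }` has Lebesgue measure zero, i.e. `c`
satisfies condition (SV) with `μ` the Lebesgue measure. -/
theorem cost_satisfies_SV {n : ℕ}
    (Ω₀ Ω₁ : Set (EuclideanSpace ℝ (Fin n)))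
    (hΩ₀ : IsCompact Ω₀) (hΩ₁ : IsCompact Ω₁)
    (hbd : volume (frontier Ω₀) = 0)
    (c : EuclideanSpace ℝ (Fin n) → EuclideanSpace ℝ (Fin n) → ℝ)
    (hc : ContDiff ℝ 1 (Function.uncurry c))
    (hinj : ∀ x ∈ Ω₀, Set.InjOn (fun y => gradient (fun x' => c x' y) x) Ω₁)
    (φ : EuclideanSpace ℝ (Fin n) → ℝ) (hφ : CConcaveOn Ω₀ Ω₁ c φ) :
    volume {x ∈ Ω₀ | ¬ ∃ m, cSuperdiffOn Ω₀ Ω₁ c φ x = {m}} = 0 := by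
  obtain ⟨K, hcK⟩ := hc.exists_lipschitzOnWith_uncurry_left hΩ₀.isBounded hΩ₁.isBounded
  have hφK := hφ.lipschitzOnWith hcK
  have hbdd : ∀ m ∈ Ω₁, BddBelow ((fun x => c x m - φ x) '' Ω₀) := fun m hm =>
    hΩ₀.bddBelow_image ((hcK m hm).continuousOn.sub hφK.continuousOn)
  have hdiff : ∀ᵐ x, x ∈ interior Ω₀ → DifferentiableAt ℝ φ x := by
    filter_upwards [(hφK.mono interior_subset).ae_differentiableWithinAt_of_mem] with x hx hint
    exact (hx hint).differentiableAt (isOpen_interior.mem_nhds hint)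
  have hpartial : ∀ x m, DifferentiableAt ℝ (fun x => c x m) x := fun x m =>
    (hc.differentiable one_ne_zero _).comp x (differentiableAt_id.prodMk (differentiableAt_const m))
  refine measure_mono_null (fun x ⟨hx, hbad⟩ => ?_) (measure_union_null hbd (ae_iff.1 hdiff))
  by_cases hint : x ∈ interior Ω₀
  · refine Or.inr fun hφx => hbad ?_
    exact exists_eq_singleton_iff_nonempty_subsingleton.2 ⟨hφ.nonempty_cSuperdiffOn hx,
      subsingleton_cSuperdiffOn hint (hφx hint) (fun m _ => hpartial x m) hbdd (hinj x hx)⟩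
  · exact Or.inl ⟨subset_closure hx, hint⟩
end

section
/- Let Ω₀, Ω₁ ⊂ ℝⁿ be compact sets, β > 0, and f : Ω₀ → ℝ a C¹ function with β > f(x) for all x ∈ Ω₀. Define the cost c(x,y) = √((β − f(x))² + |x − y|²) for (x,y) ∈ Ω₀ × Ω₁, and set G = max_{x∈Ω₀, y∈Ω₁} |x − y|, M₀ = min_{x∈Ω₀} (β − f(x)) > 0, M_f = sup_{x∈Ω₀} |∇f(x)|, and ‖f‖_∞ = sup_{x∈Ω₀} |f(x)|. If M_f² (β + ‖f‖_∞) + 2 M_f G ≤ M₀, then |∇ₓc(x,y)| ≤ 1 for all (x,y) ∈ Ω₀ × Ω₁, and for each fixed x ∈ Ω₀ the map Ω₁ ∋ y ↦ ∇ₓc(x,y) = (−(β − f(x))∇f(x) + (x − y)) / c(x,y) is injective. -/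
open scoped RealInnerProductSpace

/-- Core injectivity argument for the twist map. -/
lemma twist_aux_injective {E : Type*} [NormedAddCommGroup E] [InnerProductSpace ℝ E]
    (a : ℝ) (ha : 0 < a) (x w y₁ y₂ : E)
    (hw : 2 * ‖w + (x - y₂)‖ * ‖w‖ ≤ a ^ 2 + ‖w‖ ^ 2)
    (heq : (Real.sqrt (a ^ 2 + ‖x - y₁‖ ^ 2))⁻¹ • (w + (x - y₁))
         = (Real.sqrt (a ^ 2 + ‖x - y₂‖ ^ 2))⁻¹ • (w + (x - y₂))) :
    y₁ = y₂ := by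
  set c₁ := Real.sqrt (a ^ 2 + ‖x - y₁‖ ^ 2) with hc₁def
  set c₂ := Real.sqrt (a ^ 2 + ‖x - y₂‖ ^ 2) with hc₂def
  have hc₁ : 0 < c₁ := Real.sqrt_pos.mpr (by positivity)
  have hc₂ : 0 < c₂ := Real.sqrt_pos.mpr (by positivity)
  have hc₁sq : c₁ ^ 2 = a ^ 2 + ‖x - y₁‖ ^ 2 := Real.sq_sqrt (by positivity)
  have hc₂sq : c₂ ^ 2 = a ^ 2 + ‖x - y₂‖ ^ 2 := Real.sq_sqrt (by positivity)
  set t := c₁ / c₂ with htdef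
  have ht : 0 < t := div_pos hc₁ hc₂
  set u₂ : E := w + (x - y₂) with hu₂def
  have hu₁ : w + (x - y₁) = t • u₂ := by
    have h := congrArg (fun v => c₁ • v) heq
    simp only [smul_smul, mul_inv_cancel₀ hc₁.ne', one_smul] at h
    rw [h, htdef, div_eq_mul_inv]
  set B : ℝ := ⟪u₂, w⟫ with hBdef
  have hxy₁ : x - y₁ = t • u₂ - w := by rw [← hu₁]; abel
  have hxy₂ : x - y₂ = u₂ - w := by rw [hu₂def]; abel
  have h3 : ‖t • u₂ - w‖ ^ 2 = t ^ 2 * ‖u₂‖ ^ 2 - 2 * (t * B) + ‖w‖ ^ 2 := by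
    rw [norm_sub_sq_real, norm_smul, Real.norm_of_nonneg ht.le, real_inner_smul_left,
      mul_pow]
  have h4 : ‖x - y₂‖ ^ 2 = ‖u₂‖ ^ 2 - 2 * B + ‖w‖ ^ 2 := by
    rw [hxy₂, norm_sub_sq_real]
  have h2 : c₁ ^ 2 = t ^ 2 * c₂ ^ 2 := by rw [htdef]; field_simp
  have hE : a ^ 2 + (t ^ 2 * ‖u₂‖ ^ 2 - 2 * (t * B) + ‖w‖ ^ 2)
      = t ^ 2 * (a ^ 2 + (‖u₂‖ ^ 2 - 2 * B + ‖w‖ ^ 2)) := by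
    rw [← h3, ← h4, ← hxy₁, ← hc₂sq, ← h2, hc₁sq]
  have hB : B ≤ ‖u₂‖ * ‖w‖ := real_inner_le_norm _ _
  have hA : 0 < a ^ 2 + ‖w‖ ^ 2 := by positivity
  have ht1 : t = 1 := by
    have hfac : (1 - t) * ((a ^ 2 + ‖w‖ ^ 2) * (1 + t) - 2 * B * t) = 0 := by
      linear_combination hE
    have hpos : 0 < (a ^ 2 + ‖w‖ ^ 2) * (1 + t) - 2 * B * t := by
      have h5 : 2 * B * t ≤ 2 * ‖u₂‖ * ‖w‖ * t := by nlinarith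
      have h6 : 2 * ‖u₂‖ * ‖w‖ * t ≤ (a ^ 2 + ‖w‖ ^ 2) * t :=
        mul_le_mul_of_nonneg_right hw ht.le
      nlinarith
    rcases mul_eq_zero.mp hfac with h | h
    · linarith
    · exact absurd h hpos.ne'
  rw [ht1, one_smul, hu₂def] at hu₁
  have := add_left_cancel hu₁
  exact sub_right_injective this

/-- For the cost `c(x,y) = √((β − f(x))² + |x − y|²)` with `β > f` on the
compact set `Ω₀`, if `M_f² (β + ‖f‖_∞) + 2 M_f G ≤ M₀` (where `G` bounds `|x − y|`, `M₀ > 0`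
is a lower bound for `β − f`, `M_f` bounds `|∇f|` and `‖f‖_∞` bounds `|f|` on `Ω₀`), then
`|∇ₓc(x,y)| ≤ 1` for all `(x,y) ∈ Ω₀ × Ω₁`, and for each fixed `x ∈ Ω₀` the map
`y ↦ ∇ₓc(x,y) = (−(β − f(x))∇f(x) + (x − y))/c(x,y)` is injective on `Ω₁`. -/
theorem twist_condition_constant_g {n : ℕ}
    (Ω₀ Ω₁ : Set (EuclideanSpace ℝ (Fin n)))
    (hΩ₀ : IsCompact Ω₀) (hΩ₁ : IsCompact Ω₁)
    (β : ℝ) (hβ : 0 < β)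
    (f : EuclideanSpace ℝ (Fin n) → ℝ) (hf : ContDiff ℝ 1 f)
    (hβf : ∀ x ∈ Ω₀, f x < β)
    (G M₀ Mf Mfinf : ℝ)
    (hG : ∀ x ∈ Ω₀, ∀ y ∈ Ω₁, ‖x - y‖ ≤ G)
    (hM₀pos : 0 < M₀) (hM₀ : ∀ x ∈ Ω₀, M₀ ≤ β - f x)
    (hMf : ∀ x ∈ Ω₀, ‖gradient f x‖ ≤ Mf)
    (hMfinf : ∀ x ∈ Ω₀, |f x| ≤ Mfinf)
    (hcond : Mf ^ 2 * (β + Mfinf) + 2 * Mf * G ≤ M₀) :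
    (∀ x ∈ Ω₀, ∀ y ∈ Ω₁,
      ‖(Real.sqrt ((β - f x) ^ 2 + ‖x - y‖ ^ 2))⁻¹ •
        (-((β - f x) • gradient f x) + (x - y))‖ ≤ 1) ∧
    (∀ x ∈ Ω₀, Set.InjOn
      (fun y => (Real.sqrt ((β - f x) ^ 2 + ‖x - y‖ ^ 2))⁻¹ •
        (-((β - f x) • gradient f x) + (x - y))) Ω₁) := by
  have key : ∀ x ∈ Ω₀, ∀ y ∈ Ω₁,
      (β - f x) * ‖gradient f x‖ ^ 2 + 2 * ‖gradient f x‖ * ‖x - y‖ ≤ β - f x := by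
    intro x hx y hy
    have ha : 0 < β - f x := lt_of_lt_of_le hM₀pos (hM₀ x hx)
    have hgMf : ‖gradient f x‖ ≤ Mf := hMf x hx
    have hg0 : (0:ℝ) ≤ ‖gradient f x‖ := norm_nonneg _
    have hMf0 : 0 ≤ Mf := le_trans hg0 hgMf
    have hrG : ‖x - y‖ ≤ G := hG x hx y hy
    have hr0 : (0:ℝ) ≤ ‖x - y‖ := norm_nonneg _
    have hMfinf0 : 0 ≤ Mfinf := le_trans (abs_nonneg _) (hMfinf x hx)
    have haβ : β - f x ≤ β + Mfinf := by
      have := abs_le.mp (hMfinf x hx); linarith [this.1]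
    have hM : M₀ ≤ β - f x := hM₀ x hx
    have hgsq : ‖gradient f x‖ ^ 2 ≤ Mf ^ 2 := by nlinarith
    have h1 : (β - f x) * ‖gradient f x‖ ^ 2 ≤ (β + Mfinf) * Mf ^ 2 :=
      mul_le_mul haβ hgsq (by positivity) (by positivity)
    have h2 : ‖gradient f x‖ * ‖x - y‖ ≤ Mf * G :=
      mul_le_mul hgMf hrG hr0 hMf0
    nlinarith
  have hapos : ∀ x ∈ Ω₀, 0 < β - f x := fun x hx => lt_of_lt_of_le hM₀pos (hM₀ x hx)
  constructor
  · intro x hx y hy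
    have ha : 0 < β - f x := hapos x hx
    have hr0 : (0:ℝ) ≤ ‖x - y‖ := norm_nonneg _
    have hg0 : (0:ℝ) ≤ ‖gradient f x‖ := norm_nonneg _
    have hc : 0 < Real.sqrt ((β - f x) ^ 2 + ‖x - y‖ ^ 2) :=
      Real.sqrt_pos.mpr (by positivity)
    have hv : ‖-((β - f x) • gradient f x) + (x - y)‖
        ≤ (β - f x) * ‖gradient f x‖ + ‖x - y‖ := by
      calc ‖-((β - f x) • gradient f x) + (x - y)‖
          ≤ ‖-((β - f x) • gradient f x)‖ + ‖x - y‖ := norm_add_le _ _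
        _ = (β - f x) * ‖gradient f x‖ + ‖x - y‖ := by
            rw [norm_neg, norm_smul, Real.norm_of_nonneg ha.le]
    have hk := key x hx y hy
    have hsq : ((β - f x) * ‖gradient f x‖ + ‖x - y‖) ^ 2
        ≤ (β - f x) ^ 2 + ‖x - y‖ ^ 2 := by
      nlinarith [mul_le_mul_of_nonneg_left hk ha.le]
    have hle : ‖-((β - f x) • gradient f x) + (x - y)‖
        ≤ Real.sqrt ((β - f x) ^ 2 + ‖x - y‖ ^ 2) := by
      refine le_trans hv ?_
      rw [show (β - f x) * ‖gradient f x‖ + ‖x - y‖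
          = Real.sqrt (((β - f x) * ‖gradient f x‖ + ‖x - y‖) ^ 2) from
        (Real.sqrt_sq (by positivity)).symm]
      exact Real.sqrt_le_sqrt hsq
    rw [norm_smul, Real.norm_of_nonneg (inv_nonneg.mpr hc.le), inv_mul_le_iff₀ hc]
    simpa using hle
  · intro x hx y₁ hy₁ y₂ hy₂ heq
    simp only at heq
    have ha : 0 < β - f x := hapos x hx
    refine twist_aux_injective (β - f x) ha x (-((β - f x) • gradient f x)) y₁ y₂ ?_ heq
    have hk := key x hx y₂ hy₂
    have hwnorm : ‖-((β - f x) • gradient f x)‖ = (β - f x) * ‖gradient f x‖ := by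
      rw [norm_neg, norm_smul, Real.norm_of_nonneg ha.le]
    have hun : ‖-((β - f x) • gradient f x) + (x - y₂)‖
        ≤ (β - f x) * ‖gradient f x‖ + ‖x - y₂‖ := by
      calc ‖-((β - f x) • gradient f x) + (x - y₂)‖
          ≤ ‖-((β - f x) • gradient f x)‖ + ‖x - y₂‖ := norm_add_le _ _
        _ = (β - f x) * ‖gradient f x‖ + ‖x - y₂‖ := by rw [hwnorm]
    rw [hwnorm]
    have hg0 : (0:ℝ) ≤ ‖gradient f x‖ := norm_nonneg _
    have hr0 : (0:ℝ) ≤ ‖x - y₂‖ := norm_nonneg _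
    have hw0 : (0:ℝ) ≤ ‖-((β - f x) • gradient f x) + (x - y₂)‖ := norm_nonneg _
    nlinarith [mul_le_mul_of_nonneg_left hk ha.le,
      mul_le_mul_of_nonneg_right hun (mul_nonneg ha.le hg0)]
end

section
/- Let f and g be real-valued C² functions defined on open subsets of ℝⁿ, and let c(x,y) = √((f(x) − g(y))² + |x − y|²) at a point (x,y) with f(x) ≠ g(y). Define u = ((f(x) − g(y))∇g(y) + x − y)/c(x,y) and v = ((g(y) − f(x))∇f(x) + y − x)/c(x,y). Then the mixed second partial derivatives of c are given entrywise by ∂²c/∂xᵢ∂y_j (x,y) = −(1/c(x,y)) ( vᵢ u_j + ∂f/∂xᵢ(x) · ∂g/∂y_j(y) + δ_{ij} ) for 1 ≤ i, j ≤ n, where δ_{ij} is the Kronecker delta. -/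
/-!
Differentiating `c = √((f x - g y) ^ 2 + ‖x - y‖ ^ 2)` in `y` gives, for `x'` near `x`,
`∂_y c(x', y) b = -c(x', y)⁻¹ ((f x' - g y) Dg(y) b + ⟪x' - y, b⟫)`. Differentiating this product
in `x'` by the product and inverse rules, and using `∂_x c(x, y) a = -⟪v, a⟫`, yields
`-c⁻¹ (⟪v, a⟫ ⟪u, b⟫ + Df(x) a Dg(y) b + ⟪a, b⟫)` in any real Hilbert space; the coordinate
formula is the case `a = eᵢ`, `b = e_j`.
-/

open Filter Topology RealInnerProductSpace Gradient

section

variable {F E : Type*} [NormedAddCommGroup F] [NormedSpace ℝ F]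
  [NormedAddCommGroup E] [InnerProductSpace ℝ E]

theorem HasFDerivAt.sqrt_sq_add_norm_sq {φ : F → ℝ} {w : F → E} {φ' : F →L[ℝ] ℝ}
    {w' : F →L[ℝ] E} {z : F} (hφ : HasFDerivAt φ φ' z) (hw : HasFDerivAt w w' z)
    (hz : φ z ^ 2 + ‖w z‖ ^ 2 ≠ 0) :
    HasFDerivAt (fun z => √(φ z ^ 2 + ‖w z‖ ^ 2))
      ((√(φ z ^ 2 + ‖w z‖ ^ 2))⁻¹ • (φ z • φ' + (innerSL ℝ (w z)).comp w')) z := by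
  refine (((hφ.pow 2).add hw.norm_sq).sqrt hz).congr_fderiv ?_
  ext h
  simp only [Pi.add_apply, one_div, mul_inv_rev, Nat.add_one_sub_one, pow_one, nsmul_eq_mul,
    Nat.cast_ofNat, smul_add, add_apply, smul_apply, smul_eq_mul, ContinuousLinearMap.comp_apply,
    coe_innerSL_apply]
  field_simp

end

noncomputable def cost {E : Type*} [NormedAddCommGroup E] (f g : E → ℝ) (x y : E) : ℝ :=
  √((f x - g y) ^ 2 + ‖x - y‖ ^ 2)

section

variable {E : Type*} [NormedAddCommGroup E] {f g : E → ℝ} {x y : E}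

theorem sq_sub_add_norm_sq_pos (hfg : f x ≠ g y) : 0 < (f x - g y) ^ 2 + ‖x - y‖ ^ 2 :=
  add_pos_of_pos_of_nonneg (pow_two_pos_of_ne_zero (sub_ne_zero.2 hfg)) (sq_nonneg _)

theorem cost_pos (hfg : f x ≠ g y) : 0 < cost f g x y :=
  Real.sqrt_pos.2 (sq_sub_add_norm_sq_pos hfg)

variable [InnerProductSpace ℝ E]

theorem hasFDerivAt_cost_left {f' : E →L[ℝ] ℝ} (hf : HasFDerivAt f f' x) (hfg : f x ≠ g y) :
    HasFDerivAt (fun x' => cost f g x' y)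
      ((cost f g x y)⁻¹ • ((f x - g y) • f' + innerSL ℝ (x - y))) x := by
  refine ((hf.sub_const (g y)).sqrt_sq_add_norm_sq ((hasFDerivAt_id x).sub_const y)
    (sq_sub_add_norm_sq_pos hfg).ne').congr_fderiv ?_
  ext h
  simp [cost]

theorem hasFDerivAt_cost_right {g' : E →L[ℝ] ℝ} (hg : HasFDerivAt g g' y) (hfg : f x ≠ g y) :
    HasFDerivAt (fun y' => cost f g x y')
      (-(cost f g x y)⁻¹ • ((f x - g y) • g' + innerSL ℝ (x - y))) y := by
  refine ((hg.const_sub (f x)).sqrt_sq_add_norm_sq ((hasFDerivAt_id y).const_sub x)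
    (sq_sub_add_norm_sq_pos hfg).ne').congr_fderiv ?_
  ext h
  simp only [id_eq, smul_neg, map_sub, ContinuousLinearMap.comp_neg, ContinuousLinearMap.comp_id,
    neg_sub, smul_add, add_apply, neg_apply, smul_apply, smul_eq_mul, sub_apply, coe_innerSL_apply,
    cost, neg_smul]
  ring

theorem fderiv_cost_right_apply_eventuallyEq (hf : ContinuousAt f x) (hg : DifferentiableAt ℝ g y)
    (hfg : f x ≠ g y) (b : E) :
    (fun x' => fderiv ℝ (fun y' => cost f g x' y') y b) =ᶠ[𝓝 x]
      fun x' => -(cost f g x' y)⁻¹ * ((f x' - g y) * fderiv ℝ g y b + ⟪x' - y, b⟫) := by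
  filter_upwards [hf.eventually_ne hfg] with x' hx'
  rw [(hasFDerivAt_cost_right hg.hasFDerivAt hx').fderiv]
  simp only [map_sub, smul_add, neg_smul, add_apply, neg_apply, smul_apply, smul_eq_mul, sub_apply,
    coe_innerSL_apply, inner_sub_left]
  ring

theorem fderiv_fderiv_cost_apply [CompleteSpace E] (hf : DifferentiableAt ℝ f x)
    (hg : DifferentiableAt ℝ g y) (hfg : f x ≠ g y) (a b : E) :
    fderiv ℝ (fun x' => fderiv ℝ (fun y' => cost f g x' y') y b) x a =
      -(cost f g x y)⁻¹ *
        (⟪(cost f g x y)⁻¹ • ((g y - f x) • ∇ f x + (y - x)), a⟫ *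
          ⟪(cost f g x y)⁻¹ • ((f x - g y) • ∇ g y + (x - y)), b⟫ +
          fderiv ℝ f x a * fderiv ℝ g y b + ⟪a, b⟫) := by
  have hc : cost f g x y ≠ 0 := (cost_pos hfg).ne'
  have hN : HasFDerivAt (fun x' => (f x' - g y) * fderiv ℝ g y b + ⟪x' - y, b⟫)
      (fderiv ℝ g y b • fderiv ℝ f x + innerSL ℝ b) x := by
    refine ((hf.hasFDerivAt.sub_const (g y)).mul_const (fderiv ℝ g y b)).add ?_
    convert (innerSL ℝ b).hasFDerivAt.comp x ((hasFDerivAt_id x).sub_const y) using 1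
    · funext x'
      simp [real_inner_comm]
    · simp
  have hinv : HasFDerivAt (fun x' => (cost f g x' y)⁻¹) _ x :=
    (hasDerivAt_inv hc).comp_hasFDerivAt x (hasFDerivAt_cost_left hf.hasFDerivAt hfg)
  have hpartial : HasFDerivAt
      (fun x' => -(cost f g x' y)⁻¹ * ((f x' - g y) * fderiv ℝ g y b + ⟪x' - y, b⟫)) _ x :=
    hinv.neg.mul hN
  rw [(fderiv_cost_right_apply_eventuallyEq hf.continuousAt hg hfg b).fderiv_eq, hpartial.fderiv]
  simp only [Pi.neg_apply, smul_add, neg_smul, map_sub, neg_add_rev, neg_neg, add_apply, neg_apply,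
    smul_apply, smul_eq_mul, coe_innerSL_apply, sub_apply, inner_add_left, inner_sub_left,
    inner_smul_left, map_inv₀, Real.ringHom_apply, inner_gradient_left, real_inner_comm a b]
  field_simp
  ring

end

/-- Entrywise formula for the mixed second partials of the cost
`c(x,y) = √((f(x) − g(y))² + |x − y|²)` at a point with `f(x) ≠ g(y)`:
`∂²c/∂xᵢ∂y_j = −(1/c)(vᵢ u_j + ∂f/∂xᵢ ∂g/∂y_j + δ_{ij})`, where
`u = ((f(x) − g(y))∇g(y) + x − y)/c` and `v = ((g(y) − f(x))∇f(x) + y − x)/c`. -/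
theorem mixed_second_partials_cost {n : ℕ}
    (f g : EuclideanSpace ℝ (Fin n) → ℝ)
    (U V : Set (EuclideanSpace ℝ (Fin n))) (hU : IsOpen U) (hV : IsOpen V)
    (hf : ContDiffOn ℝ 2 f U) (hg : ContDiffOn ℝ 2 g V)
    (x y : EuclideanSpace ℝ (Fin n)) (hx : x ∈ U) (hy : y ∈ V)
    (hfg : f x ≠ g y) :
    ∀ i j : Fin n,
      fderiv ℝ (fun x' => fderiv ℝ
          (fun y' => Real.sqrt ((f x' - g y') ^ 2 + ‖x' - y'‖ ^ 2)) y
          (EuclideanSpace.single j 1)) x (EuclideanSpace.single i 1)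
      = -(Real.sqrt ((f x - g y) ^ 2 + ‖x - y‖ ^ 2))⁻¹ *
        ( ((Real.sqrt ((f x - g y) ^ 2 + ‖x - y‖ ^ 2))⁻¹ •
            ((g y - f x) • gradient f x + (y - x)) : EuclideanSpace ℝ (Fin n)) i *
          ((Real.sqrt ((f x - g y) ^ 2 + ‖x - y‖ ^ 2))⁻¹ •
            ((f x - g y) • gradient g y + (x - y)) : EuclideanSpace ℝ (Fin n)) j +
          fderiv ℝ f x (EuclideanSpace.single i 1) *
            fderiv ℝ g y (EuclideanSpace.single j 1) +
          (if i = j then 1 else 0) ) := by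
  intro i j
  have hfx : DifferentiableAt ℝ f x :=
    (hf.differentiableOn two_ne_zero).differentiableAt (hU.mem_nhds hx)
  have hgy : DifferentiableAt ℝ g y :=
    (hg.differentiableOn two_ne_zero).differentiableAt (hV.mem_nhds hy)
  have key := fderiv_fderiv_cost_apply hfx hgy hfg (EuclideanSpace.single i 1)
    (EuclideanSpace.single j 1)
  rw [EuclideanSpace.inner_single_right, EuclideanSpace.inner_single_right,
    EuclideanSpace.inner_single_left, PiLp.single_apply] at key
  simpa [cost] using key
end

section
/- Let Ω₀, Ω₁ ⊂ ℝⁿ be compact sets, β ∈ ℝ, and f : Ω₀ → ℝ a C² function (defined on a neighborhood of Ω₀) with β > f(x) for all x ∈ Ω₀. Let c(x,y) = √((β − f(x))² + |x − y|²). If min_{x∈Ω₀} (β − f(x)) > (max_{x∈Ω₀, y∈Ω₁} |x − y|) · (max_{x∈Ω₀} |∇f(x)|), then det (∂²c/∂xᵢ∂y_j)(x,y) ≠ 0 for every (x,y) ∈ Ω₀ × Ω₁. -/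
open scoped RealInnerProductSpace

/-! With `g = β - f` and `c = √(g² + |x - y|²)` one has `∂c/∂y = (y - x)/c`; differentiating
in `x` gives the rank-one perturbation of a multiple of the identity
`D²ₓᵧc = -c⁻¹ (I + a bᵀ)` with `b = x - y` and `a = (g ∇f - b)/c²`. By the matrix determinant
lemma its determinant is `(-c⁻¹)ⁿ (1 + b ⬝ a) = (-c⁻¹)ⁿ g (g + ⟪∇f, x - y⟫)/c²`, which cannot
vanish once `|⟪∇f, x - y⟫| ≤ |∇f| |x - y| < g`. -/

section

variable {E F : Type*} [NormedAddCommGroup E] [NormedSpace ℝ E]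
  [NormedAddCommGroup F] [InnerProductSpace ℝ F]

theorem HasFDerivAt.sqrt_sq_add_norm_sq_s13 {u : E → ℝ} {v : E → F} {u' : E →L[ℝ] ℝ}
    {v' : E →L[ℝ] F} {x : E} (hu : HasFDerivAt u u' x) (hv : HasFDerivAt v v' x)
    (h : u x ^ 2 + ‖v x‖ ^ 2 ≠ 0) :
    HasFDerivAt (fun z => √(u z ^ 2 + ‖v z‖ ^ 2))
      ((√(u x ^ 2 + ‖v x‖ ^ 2))⁻¹ • (u x • u' + (innerSL ℝ (v x)).comp v')) x := by
  convert ((hu.pow 2).add hv.norm_sq).sqrt h using 1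
  simp only [Pi.add_apply]
  module

theorem HasGradientAt.hasFDerivAt_sqrt_sq_sub_add_norm_sub_sq [CompleteSpace F] {β : ℝ}
    {f : F → ℝ} {p x : F} (hf : HasGradientAt f p x) (y : F)
    (h : (β - f x) ^ 2 + ‖x - y‖ ^ 2 ≠ 0) :
    HasFDerivAt (fun x' => √((β - f x') ^ 2 + ‖x' - y‖ ^ 2))
      ((√((β - f x) ^ 2 + ‖x - y‖ ^ 2))⁻¹ • innerSL ℝ (x - y - (β - f x) • p)) x := by
  refine ((hasGradientAt_iff_hasFDerivAt.mp hf).const_sub β).sqrt_sq_add_norm_sq_s13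
    ((hasFDerivAt_id x).sub_const y) h |>.congr_fderiv ?_
  ext w
  simp
  ring

end

section

variable {ι : Type*} [Fintype ι] [DecidableEq ι]

theorem fderiv_sqrt_sq_add_norm_sub_sq_single {a : ℝ} {x y : EuclideanSpace ℝ ι}
    (h : a ^ 2 + ‖x - y‖ ^ 2 ≠ 0) (j : ι) :
    fderiv ℝ (fun y' => √(a ^ 2 + ‖x - y'‖ ^ 2)) y (EuclideanSpace.single j 1)
      = (y j - x j) / √(a ^ 2 + ‖x - y‖ ^ 2) := by
  have hd : HasFDerivAt (fun y' => √(a ^ 2 + ‖x - y'‖ ^ 2)) _ y :=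
    (hasFDerivAt_const a y).sqrt_sq_add_norm_sq_s13 ((hasFDerivAt_id y).const_sub x) h
  rw [hd.fderiv]
  simp [div_eq_inv_mul, EuclideanSpace.inner_single_right]

noncomputable def mixedPartials (c : EuclideanSpace ℝ ι → EuclideanSpace ℝ ι → ℝ)
    (x y : EuclideanSpace ℝ ι) : Matrix ι ι ℝ :=
  Matrix.of fun i j =>
    fderiv ℝ (fun x' => fderiv ℝ (c x') y (EuclideanSpace.single j 1)) x
      (EuclideanSpace.single i 1)

variable {β : ℝ} {f : EuclideanSpace ℝ ι → ℝ} {p x : EuclideanSpace ℝ ι}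

theorem mixedPartials_sqrt_sq_sub_add_norm_sub_sq (hf : HasGradientAt f p x) (hβ : f x ≠ β)
    (y : EuclideanSpace ℝ ι) :
    let c := √((β - f x) ^ 2 + ‖x - y‖ ^ 2)
    mixedPartials (fun x' y' => √((β - f x') ^ 2 + ‖x' - y'‖ ^ 2)) x y =
      -c⁻¹ • (1 + Matrix.replicateCol Unit ⇑((c ^ 2)⁻¹ • ((β - f x) • p - (x - y))) *
        Matrix.replicateRow Unit ⇑(x - y)) := by
  intro c
  have hpos : ∀ x', f x' ≠ β → 0 < (β - f x') ^ 2 + ‖x' - y‖ ^ 2 := fun x' h' => by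
    have : β - f x' ≠ 0 := sub_ne_zero.mpr h'.symm
    positivity
  have hc : c ≠ 0 := (Real.sqrt_pos.mpr (hpos x hβ)).ne'
  ext i j
  have hpartial_y : (fun x' => fderiv ℝ (fun y' => √((β - f x') ^ 2 + ‖x' - y'‖ ^ 2)) y
      (EuclideanSpace.single j 1)) =ᶠ[nhds x]
      fun x' => (y j - x' j) * (√((β - f x') ^ 2 + ‖x' - y‖ ^ 2))⁻¹ := by
    filter_upwards [hf.continuousAt.eventually_ne hβ] with x' hx'
    rw [fderiv_sqrt_sq_add_norm_sub_sq_single (hpos x' hx').ne', div_eq_mul_inv]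
  have hpartial_xy : HasFDerivAt
      (fun x' => (y j - x' j) * (√((β - f x') ^ 2 + ‖x' - y‖ ^ 2))⁻¹) _ x :=
    ((EuclideanSpace.proj (𝕜 := ℝ) j).hasFDerivAt.const_sub (y j)).mul
      ((hasDerivAt_inv hc).comp_hasFDerivAt x
        (hf.hasFDerivAt_sqrt_sq_sub_add_norm_sub_sq y (hpos x hβ).ne'))
  rw [mixedPartials, Matrix.of_apply, hpartial_y.fderiv_eq, hpartial_xy.fderiv]
  rcases eq_or_ne i j with rfl | hij
  · simp [Matrix.mul_apply, EuclideanSpace.inner_single_right]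
    field_simp
    ring
  · simp [Matrix.mul_apply, EuclideanSpace.inner_single_right, hij, hij.symm]
    field_simp
    ring

theorem det_mixedPartials_sqrt_sq_sub_add_norm_sub_sq (hf : HasGradientAt f p x)
    (hβ : f x ≠ β) (y : EuclideanSpace ℝ ι) :
    let c := √((β - f x) ^ 2 + ‖x - y‖ ^ 2)
    (mixedPartials (fun x' y' => √((β - f x') ^ 2 + ‖x' - y'‖ ^ 2)) x y).det =
      (-c⁻¹) ^ Fintype.card ι * ((β - f x) * (β - f x + ⟪p, x - y⟫) / c ^ 2) := by
  intro c
  have hc2 : c ^ 2 = (β - f x) ^ 2 + ‖x - y‖ ^ 2 := Real.sq_sqrt (by positivity)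
  have hc : c ≠ 0 := by
    have : β - f x ≠ 0 := sub_ne_zero.mpr hβ.symm
    exact Real.sqrt_ne_zero'.mpr (by positivity)
  rw [mixedPartials_sqrt_sq_sub_add_norm_sub_sq hf hβ, Matrix.det_smul,
    Matrix.det_one_add_replicateCol_mul_replicateRow]
  congr 1
  have hT : ⟪p, x - y⟫ = ⇑(x - y) ⬝ᵥ ⇑p := by
    rw [EuclideanSpace.inner_eq_star_dotProduct, star_trivial]
  have hS : ‖x - y‖ ^ 2 = ⇑(x - y) ⬝ᵥ ⇑(x - y) := by
    rw [← real_inner_self_eq_norm_sq, EuclideanSpace.inner_eq_star_dotProduct, star_trivial]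
  rw [WithLp.ofLp_smul, WithLp.ofLp_sub (x := (β - f x) • p), WithLp.ofLp_smul, dotProduct_smul,
    dotProduct_sub, dotProduct_smul, ← hT, ← hS, smul_eq_mul, smul_eq_mul]
  field_simp
  rw [hc2]
  ring

theorem det_mixedPartials_sqrt_sq_sub_add_norm_sub_sq_ne_zero (hf : HasGradientAt f p x)
    (y : EuclideanSpace ℝ ι) (h : |⟪p, x - y⟫| < β - f x) :
    (mixedPartials (fun x' y' => √((β - f x') ^ 2 + ‖x' - y'‖ ^ 2)) x y).det ≠ 0 := by
  have hg : 0 < β - f x := (abs_nonneg _).trans_lt h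
  have hgap : 0 < β - f x + ⟪p, x - y⟫ := by linarith [neg_abs_le ⟪p, x - y⟫]
  have hc : 0 < √((β - f x) ^ 2 + ‖x - y‖ ^ 2) := Real.sqrt_pos.mpr (by positivity)
  rw [det_mixedPartials_sqrt_sq_sub_add_norm_sub_sq hf (by linarith) y]
  exact mul_ne_zero (pow_ne_zero _ (neg_ne_zero.mpr (inv_ne_zero hc.ne'))) (by positivity)

end

theorem det_nonzero_constant_g_general {n : ℕ}
    (Ω₀ Ω₁ : Set (EuclideanSpace ℝ (Fin n)))
    (β : ℝ) (f : EuclideanSpace ℝ (Fin n) → ℝ)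
    (U : Set (EuclideanSpace ℝ (Fin n))) (hU : IsOpen U) (hΩU : Ω₀ ⊆ U)
    (hf : ContDiffOn ℝ 2 f U)
    (m₀ G Mf : ℝ)
    (hm₀ : ∀ x ∈ Ω₀, m₀ ≤ β - f x)
    (hG : ∀ x ∈ Ω₀, ∀ y ∈ Ω₁, ‖x - y‖ ≤ G)
    (hMf : ∀ x ∈ Ω₀, ‖gradient f x‖ ≤ Mf)
    (hcond : G * Mf < m₀) :
    ∀ x ∈ Ω₀, ∀ y ∈ Ω₁,
      Matrix.det (Matrix.of fun i j : Fin n =>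
        fderiv ℝ (fun x' => fderiv ℝ
            (fun y' => Real.sqrt ((β - f x') ^ 2 + ‖x' - y'‖ ^ 2)) y
            (EuclideanSpace.single j 1)) x (EuclideanSpace.single i 1)) ≠ 0 := by
  intro x hx y hy
  have hgrad : HasGradientAt f (gradient f x) x :=
    ((hf.differentiableOn two_ne_zero x (hΩU hx)).differentiableAt
      (hU.mem_nhds (hΩU hx))).hasGradientAt
  have hslope : |⟪gradient f x, x - y⟫| ≤ G * Mf := by
    rw [mul_comm]
    exact (abs_real_inner_le_norm _ _).trans
      (mul_le_mul (hMf x hx) (hG x hx y hy) (norm_nonneg _) ((norm_nonneg _).trans (hMf x hx)))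
  exact det_mixedPartials_sqrt_sq_sub_add_norm_sub_sq_ne_zero hgrad y
    (hslope.trans_lt (hcond.trans_le (hm₀ x hx)))

/-- For the cost `c(x,y) = √((β − f(x))² + |x − y|²)` with `f` of class `C²`
on a neighborhood of the compact set `Ω₀` and `β > f` on `Ω₀`, if
`min_{Ω₀}(β − f) > (max |x − y|)(max |∇f|)` then the determinant of the matrix of mixed
second partials of `c` is nonzero at every `(x,y) ∈ Ω₀ × Ω₁`.  (Here `m₀` is a positive
lower bound for `β − f`, `G` an upper bound for `|x − y|` and `Mf` an upper bound for
`|∇f|`, with `G · Mf < m₀`.) -/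
theorem det_nonzero_constant_g {n : ℕ}
    (Ω₀ Ω₁ : Set (EuclideanSpace ℝ (Fin n)))
    (hΩ₀ : IsCompact Ω₀) (hΩ₁ : IsCompact Ω₁)
    (β : ℝ) (f : EuclideanSpace ℝ (Fin n) → ℝ)
    (U : Set (EuclideanSpace ℝ (Fin n))) (hU : IsOpen U) (hΩU : Ω₀ ⊆ U)
    (hf : ContDiffOn ℝ 2 f U)
    (hβf : ∀ x ∈ Ω₀, f x < β)
    (m₀ G Mf : ℝ)
    (hm₀ : ∀ x ∈ Ω₀, m₀ ≤ β - f x)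
    (hG : ∀ x ∈ Ω₀, ∀ y ∈ Ω₁, ‖x - y‖ ≤ G)
    (hMf : ∀ x ∈ Ω₀, ‖gradient f x‖ ≤ Mf)
    (hcond : G * Mf < m₀) :
    ∀ x ∈ Ω₀, ∀ y ∈ Ω₁,
      Matrix.det (Matrix.of fun i j : Fin n =>
        fderiv ℝ (fun x' => fderiv ℝ
            (fun y' => Real.sqrt ((β - f x') ^ 2 + ‖x' - y'‖ ^ 2)) y
            (EuclideanSpace.single j 1)) x (EuclideanSpace.single i 1)) ≠ 0 :=
  det_nonzero_constant_g_general Ω₀ Ω₁ β f U hU hΩU hf m₀ G Mf hm₀ hG hMf hcond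
end

section
/- Let f and g be real-valued C¹ functions near points x, y ∈ ℝⁿ with g(y) > f(x), let c = √((f(x) − g(y))² + |x − y|²), and set u = ((f(x) − g(y))∇g(y) + x − y)/c and v = ((g(y) − f(x))∇f(x) + y − x)/c. Suppose α₁, α₂ > 0 are such that |(x − y)·∇g(y)| ≤ α₁ (g(y) − f(x)), |(x − y)·∇f(x)| ≤ α₁ (g(y) − f(x)), and |∇f(x)| + |∇g(y)| ≤ α₂. Then (1 + ∇g(y)·∇f(x)) (1 + u·v) − (u·∇g(y)) (∇f(x)·v) ≥ ((g(y) − f(x))² / c²) · (1 − α₁ (2 + α₂² + α₁)). -/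
/-!
Write `A = g(y) - f(x)` and `d = x - y`, so `c² = A² + ‖d‖²`. Multiplied by `c²`, the quantity
becomes a polynomial in `A`, `⟪d, ∇f⟫`, `⟪d, ∇g⟫`, `⟪∇g, ∇f⟫` and the norms of the gradients, in
which the `‖d‖²` terms cancel. Its leading part `A² (1 - ⟪∇g, ∇f⟫² + ‖∇f‖² ‖∇g‖²)` is at least
`A²` by Cauchy–Schwarz, and each remaining term is bounded below by `-α₁ A²` times `2`, `α₂²` or
`α₁`.
-/

open scoped RealInnerProductSpace

variable {E : Type*} [NormedAddCommGroup E] [InnerProductSpace ℝ E]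

lemma abs_inner_sub_norm_sq_le (p q : E) : |⟪p, q⟫ - ‖q‖ ^ 2| ≤ ‖p‖ * ‖q‖ + ‖q‖ ^ 2 :=
  (abs_sub _ _).trans <| add_le_add (abs_real_inner_le_norm p q) (abs_of_nonneg (sq_nonneg _)).le

lemma neg_mul_le_mul_of_abs_le {a b s t : ℝ} (ha : |a| ≤ s) (hb : |b| ≤ t) : -(s * t) ≤ a * b := by
  refine (neg_le_neg ?_).trans (neg_abs_le (a * b))
  rw [abs_mul]
  exact mul_le_mul ha hb (abs_nonneg b) ((abs_nonneg a).trans ha)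

lemma le_keyQuantity_numerator (A α₁ α₂ : ℝ) (d p q : E) (hA : 0 ≤ A)
    (h₁ : |⟪d, q⟫| ≤ α₁ * A) (h₂ : |⟪d, p⟫| ≤ α₁ * A) (h₃ : ‖p‖ + ‖q‖ ≤ α₂) :
    A ^ 2 * (1 - α₁ * (2 + α₂ ^ 2 + α₁)) ≤
      (1 + ⟪q, p⟫) * (A ^ 2 * (1 - ⟪q, p⟫) + A * (⟪d, q⟫ + ⟪d, p⟫)) -
        (⟪d, q⟫ - A * ‖q‖ ^ 2) * (A * ‖p‖ ^ 2 - ⟪d, p⟫) := by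
  have hαA : 0 ≤ α₁ * A := (abs_nonneg _).trans h₁
  have cauchy_schwarz : ⟪q, p⟫ ^ 2 ≤ ‖p‖ ^ 2 * ‖q‖ ^ 2 := by
    rw [← mul_pow, ← sq_abs, mul_comm]
    exact pow_le_pow_left₀ (abs_nonneg _) (abs_real_inner_le_norm q p) 2
  have linear : -(2 * (α₁ * A)) ≤ ⟪d, q⟫ + ⟪d, p⟫ := by
    linarith [neg_abs_le ⟪d, q⟫, neg_abs_le ⟪d, p⟫]
  have mixed : -(α₁ * A * (‖p‖ + ‖q‖) ^ 2) ≤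
      ⟪d, p⟫ * (⟪q, p⟫ - ‖q‖ ^ 2) + ⟪d, q⟫ * (⟪q, p⟫ - ‖p‖ ^ 2) := by
    have hp := neg_mul_le_mul_of_abs_le h₂ (real_inner_comm p q ▸ abs_inner_sub_norm_sq_le p q)
    have hq := neg_mul_le_mul_of_abs_le h₁ (abs_inner_sub_norm_sq_le q p)
    linarith
  have hα₂ : (‖p‖ + ‖q‖) ^ 2 ≤ α₂ ^ 2 := pow_le_pow_left₀ (by positivity) h₃ 2
  have quadratic : -(α₁ * A) ^ 2 ≤ ⟪d, q⟫ * ⟪d, p⟫ := by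
    simpa [sq] using neg_mul_le_mul_of_abs_le h₁ h₂
  linarith [mul_le_mul_of_nonneg_left cauchy_schwarz (sq_nonneg A),
    mul_le_mul_of_nonneg_left linear hA, mul_le_mul_of_nonneg_left mixed hA,
    mul_le_mul_of_nonneg_left hα₂ (mul_nonneg hαA hA)]

def keyQuantity (p q u v : E) : ℝ := (1 + ⟪q, p⟫) * (1 + ⟪u, v⟫) - ⟪u, q⟫ * ⟪p, v⟫

lemma sq_mul_keyQuantity_smul (p q u v : E) {c : ℝ} (hc : c ≠ 0) :
    c ^ 2 * keyQuantity p q (c⁻¹ • u) (c⁻¹ • v) =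
      (1 + ⟪q, p⟫) * (c ^ 2 + ⟪u, v⟫) - ⟪u, q⟫ * ⟪p, v⟫ := by
  simp only [keyQuantity, real_inner_smul_left, real_inner_smul_right]
  field_simp

theorem keyQuantity_ge {a b : ℝ} (x y p q : E) (hab : a < b) (α₁ α₂ : ℝ)
    (h₁ : |⟪x - y, q⟫| ≤ α₁ * (b - a)) (h₂ : |⟪x - y, p⟫| ≤ α₁ * (b - a))
    (h₃ : ‖p‖ + ‖q‖ ≤ α₂) :
    keyQuantity p q ((√((a - b) ^ 2 + ‖x - y‖ ^ 2))⁻¹ • ((a - b) • q + (x - y)))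
        ((√((a - b) ^ 2 + ‖x - y‖ ^ 2))⁻¹ • ((b - a) • p + (y - x))) ≥
      ((b - a) ^ 2 / (√((a - b) ^ 2 + ‖x - y‖ ^ 2)) ^ 2) * (1 - α₁ * (2 + α₂ ^ 2 + α₁)) := by
  set c := √((a - b) ^ 2 + ‖x - y‖ ^ 2)
  set A := b - a
  set d := x - y
  have hA : 0 < A := sub_pos.mpr hab
  have hc2 : c ^ 2 = A ^ 2 + ‖d‖ ^ 2 := by
    rw [Real.sq_sqrt (by positivity)]; ring
  have hab' : a - b = -A := by ring
  have hc : 0 < c := Real.sqrt_pos.mpr (by rw [hab', neg_sq]; positivity)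
  have hyx : y - x = -d := (neg_sub x y).symm
  rw [ge_iff_le, div_mul_eq_mul_div, div_le_iff₀ (pow_pos hc 2), mul_comm _ (c ^ 2),
    sq_mul_keyQuantity_smul p q _ _ hc.ne', hab', hyx, hc2]
  refine (le_keyQuantity_numerator A α₁ α₂ d p q hA.le h₁ h₂ h₃).trans_eq ?_
  simp only [inner_add_left, inner_add_right, inner_neg_right, real_inner_smul_left,
    real_inner_smul_right, real_inner_self_eq_norm_sq, real_inner_comm d]
  ring

theorem key_lower_bound_C3_general {n : ℕ}
    (f g : EuclideanSpace ℝ (Fin n) → ℝ)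
    (x y : EuclideanSpace ℝ (Fin n))
    (hfg : f x < g y)
    (α₁ α₂ : ℝ)
    (h₁ : |⟪x - y, gradient g y⟫| ≤ α₁ * (g y - f x))
    (h₂ : |⟪x - y, gradient f x⟫| ≤ α₁ * (g y - f x))
    (h₃ : ‖gradient f x‖ + ‖gradient g y‖ ≤ α₂) :
    (1 + ⟪gradient g y, gradient f x⟫) *
      (1 + ⟪(Real.sqrt ((f x - g y) ^ 2 + ‖x - y‖ ^ 2))⁻¹ •
              ((f x - g y) • gradient g y + (x - y)),
            (Real.sqrt ((f x - g y) ^ 2 + ‖x - y‖ ^ 2))⁻¹ •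
              ((g y - f x) • gradient f x + (y - x))⟫)
    - ⟪(Real.sqrt ((f x - g y) ^ 2 + ‖x - y‖ ^ 2))⁻¹ •
          ((f x - g y) • gradient g y + (x - y)), gradient g y⟫ *
      ⟪gradient f x, (Real.sqrt ((f x - g y) ^ 2 + ‖x - y‖ ^ 2))⁻¹ •
          ((g y - f x) • gradient f x + (y - x))⟫
    ≥ ((g y - f x) ^ 2 / (Real.sqrt ((f x - g y) ^ 2 + ‖x - y‖ ^ 2)) ^ 2) *
        (1 - α₁ * (2 + α₂ ^ 2 + α₁)) :=
  keyQuantity_ge x y (gradient f x) (gradient g y) hfg α₁ α₂ h₁ h₂ h₃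

/-- With `c = √((f(x) − g(y))² + |x − y|²)`, `g(y) > f(x)`,
`u = ((f(x) − g(y))∇g(y) + x − y)/c`, `v = ((g(y) − f(x))∇f(x) + y − x)/c`, and
constants `α₁, α₂ > 0` with `|(x − y)·∇g(y)| ≤ α₁(g(y) − f(x))`,
`|(x − y)·∇f(x)| ≤ α₁(g(y) − f(x))` and `|∇f(x)| + |∇g(y)| ≤ α₂`, one has
`(1 + ∇g·∇f)(1 + u·v) − (u·∇g)(∇f·v) ≥ ((g − f)²/c²)(1 − α₁(2 + α₂² + α₁))`. -/
theorem key_lower_bound_C3 {n : ℕ}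
    (f g : EuclideanSpace ℝ (Fin n) → ℝ)
    (x y : EuclideanSpace ℝ (Fin n))
    (hf : ContDiffAt ℝ 1 f x) (hg : ContDiffAt ℝ 1 g y)
    (hfg : f x < g y)
    (α₁ α₂ : ℝ) (hα₁ : 0 < α₁) (hα₂ : 0 < α₂)
    (h₁ : |⟪x - y, gradient g y⟫| ≤ α₁ * (g y - f x))
    (h₂ : |⟪x - y, gradient f x⟫| ≤ α₁ * (g y - f x))
    (h₃ : ‖gradient f x‖ + ‖gradient g y‖ ≤ α₂) :
    (1 + ⟪gradient g y, gradient f x⟫) *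
      (1 + ⟪(Real.sqrt ((f x - g y) ^ 2 + ‖x - y‖ ^ 2))⁻¹ •
              ((f x - g y) • gradient g y + (x - y)),
            (Real.sqrt ((f x - g y) ^ 2 + ‖x - y‖ ^ 2))⁻¹ •
              ((g y - f x) • gradient f x + (y - x))⟫)
    - ⟪(Real.sqrt ((f x - g y) ^ 2 + ‖x - y‖ ^ 2))⁻¹ •
          ((f x - g y) • gradient g y + (x - y)), gradient g y⟫ *
      ⟪gradient f x, (Real.sqrt ((f x - g y) ^ 2 + ‖x - y‖ ^ 2))⁻¹ •
          ((g y - f x) • gradient f x + (y - x))⟫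
    ≥ ((g y - f x) ^ 2 / (Real.sqrt ((f x - g y) ^ 2 + ‖x - y‖ ^ 2)) ^ 2) *
        (1 - α₁ * (2 + α₂ ^ 2 + α₁)) :=
  key_lower_bound_C3_general f g x y hfg α₁ α₂ h₁ h₂ h₃
end

section
/- (Generalized Snell's law via Lagrange multipliers.) Let φ : ℝ³ → ℝ be C¹ and ψ : ℝ³ → ℝ be differentiable, let n₁, n₂ > 0, and let A, B, P ∈ ℝ³ with P ≠ A, P ≠ B, φ(P) = 0 and ∇φ(P) ≠ 0. If P is a local extremum of the function Q ↦ n₁ |Q − A| + n₂ |B − Q| − ψ(Q) restricted to the level surface { Q : φ(Q) = 0 }, then, setting 𝐱 = (P − A)/|P − A| and 𝐦 = (B − P)/|B − P|, the vector n₁𝐱 − n₂𝐦 − ∇ψ(P) is parallel to ∇φ(P); equivalently, (n₁𝐱 − n₂𝐦 − ∇ψ(P)) × ∇φ(P) = 0, where × is the cross product in ℝ³. -/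
/-!
At a constrained extremum the derivative of the objective vanishes on the tangent space
`ker dφ(P)` of the level surface, so the gradient of the objective is a multiple of `∇φ(P)`
(Lagrange). Since `Q ↦ |Q - A|` has gradient the unit vector `(Q - A)/|Q - A|`, the gradient of
the optical path length minus the phase is `n₁𝐱 - n₂𝐦 - ∇ψ(P)`.
-/

open Filter Topology InnerProductSpace

section Lagrange

variable {E F : Type*} [NormedAddCommGroup E] [NormedSpace ℝ E] [CompleteSpace E]
  [NormedAddCommGroup F] [NormedSpace ℝ F] [FiniteDimensional ℝ F]
  {f : E → F} {f' : E →L[ℝ] F} {φ : E → ℝ} {φ' : StrongDual ℝ E} {x₀ : E}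

/- Unlike `IsLocalExtrOn.range_ne_top_of_hasStrictFDerivAt`, the objective `φ` need only be
Fréchet differentiable: the implicit function theorem parametrizes the level set near `x₀` by
`ker f'` with derivative the inclusion, and `φ` along this chart has a free local extremum. -/
theorem IsLocalExtrOn.ker_le_ker_of_hasFDerivAt (hextr : IsLocalExtrOn φ {x | f x = f x₀} x₀)
    (hf : HasStrictFDerivAt f f' x₀) (hf' : f'.range = ⊤) (hφ : HasFDerivAt φ φ' x₀) :
    f'.ker ≤ φ'.ker := by
  set g := hf.implicitFunction f f' hf' (f x₀)
  have hg : HasStrictFDerivAt g f'.ker.subtypeL 0 := hf.to_implicitFunction hf'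
  have hg0 : g 0 = x₀ := hf.implicitFunction_apply_image hf'
  have hg_level : ∀ᶠ y in 𝓝 0, f (g y) = f x₀ :=
    (tendsto_const_nhds.prodMk_nhds tendsto_id).eventually (hf.map_implicitFunction_eq hf')
  have hg_tendsto : Tendsto g (𝓝 0) (𝓝[{x | f x = f x₀}] x₀) :=
    tendsto_nhdsWithin_iff.2 ⟨hg0 ▸ hg.continuousAt.tendsto, hg_level⟩
  have hcomp : HasFDerivAt (φ ∘ g) (φ'.comp f'.ker.subtypeL) 0 :=
    (hg0 ▸ hφ).comp 0 hg.hasFDerivAt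
  have hextr_g0 : IsExtrFilter φ (𝓝[{x | f x = f x₀}] x₀) (g 0) := by rw [hg0]; exact hextr
  have hzero := IsLocalExtr.hasFDerivAt_eq_zero (hextr_g0.comp_tendsto hg_tendsto) hcomp
  intro v hv
  simpa using congr($hzero ⟨v, hv⟩)

end Lagrange

theorem ContinuousLinearMap.exists_eq_smul_of_ker_le {𝕜 E : Type*} [NormedField 𝕜]
    [AddCommGroup E] [Module 𝕜 E] [TopologicalSpace E] {f g : E →L[𝕜] 𝕜}
    (h : f.ker ≤ g.ker) : ∃ c : 𝕜, g = c • f := by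
  have hspan := mem_span_of_iInf_ker_le_ker (ι := Unit) (L := fun _ => (f : E →ₗ[𝕜] 𝕜))
    (K := g) (by simpa using h)
  rw [Set.range_const, Submodule.mem_span_singleton] at hspan
  obtain ⟨c, hc⟩ := hspan
  exact ⟨c, ContinuousLinearMap.coe_injective hc.symm⟩

section Gradient

variable {E : Type*} [NormedAddCommGroup E] [InnerProductSpace ℝ E] [CompleteSpace E]
  {f g : E → ℝ} {f' g' x : E}

theorem HasGradientAt.add (hf : HasGradientAt f f' x) (hg : HasGradientAt g g' x) :
    HasGradientAt (fun y => f y + g y) (f' + g') x := by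
  rw [hasGradientAt_iff_hasFDerivAt, map_add]
  exact hf.hasFDerivAt.add hg.hasFDerivAt

theorem HasGradientAt.sub (hf : HasGradientAt f f' x) (hg : HasGradientAt g g' x) :
    HasGradientAt (fun y => f y - g y) (f' - g') x := by
  rw [hasGradientAt_iff_hasFDerivAt, map_sub]
  exact hf.hasFDerivAt.sub hg.hasFDerivAt

theorem HasGradientAt.const_mul (c : ℝ) (hf : HasGradientAt f f' x) :
    HasGradientAt (fun y => c * f y) (c • f') x := by
  rw [hasGradientAt_iff_hasFDerivAt, map_smul]
  exact hf.hasFDerivAt.const_mul c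

theorem hasGradientAt_norm_sub {a : E} (hx : x ≠ a) :
    HasGradientAt (fun y => ‖y - a‖) (‖x - a‖⁻¹ • (x - a)) x := by
  have hsq : ‖x - a‖ ^ 2 ≠ 0 := by simpa [sub_eq_zero] using hx
  have hderiv : HasFDerivAt (fun y => ‖y - a‖) ((1 / (2 * ‖x - a‖)) • (2 • innerSL ℝ (x - a))) x := by
    simpa [Real.sqrt_sq (norm_nonneg _)] using ((hasFDerivAt_sub_const (x := x) a).norm_sq).sqrt hsq
  have hdual :
      toDual ℝ E (‖x - a‖⁻¹ • (x - a)) = (1 / (2 * ‖x - a‖)) • (2 • innerSL ℝ (x - a)) := by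
    ext v
    simp only [map_smul, smul_apply, toDual_apply_apply, coe_innerSL_apply, smul_eq_mul,
      nsmul_eq_mul, Nat.cast_ofNat]
    field_simp
  rw [hasGradientAt_iff_hasFDerivAt, hdual]
  exact hderiv

theorem IsLocalExtrOn.exists_eq_smul_gradient {φ : E → ℝ} {x₀ : E}
    (hextr : IsLocalExtrOn φ {x | f x = f x₀} x₀) (hf : ContDiffAt ℝ 1 f x₀)
    (hf₀ : gradient f x₀ ≠ 0) (hφ : HasGradientAt φ g' x₀) : ∃ c : ℝ, g' = c • gradient f x₀ := by
  have hfd : HasStrictFDerivAt f (toDual ℝ E (gradient f x₀)) x₀ := by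
    rw [toDual_gradient]; exact hf.hasStrictFDerivAt one_ne_zero
  have hrange : (toDual ℝ E (gradient f x₀) : E →ₗ[ℝ] ℝ).range = ⊤ :=
    LinearMap.range_eq_top.2 (LinearMap.surjective_of_ne_zero fun h => hf₀ <|
      (toDual ℝ E).map_eq_zero_iff.1 <| ContinuousLinearMap.coe_inj.1 <|
        h.trans ContinuousLinearMap.toLinearMap_zero.symm)
  obtain ⟨c, hc⟩ := ContinuousLinearMap.exists_eq_smul_of_ker_le
    (hextr.ker_le_ker_of_hasFDerivAt hfd hrange hφ.hasFDerivAt)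
  exact ⟨c, (toDual ℝ E).injective (by rw [map_smul]; exact hc)⟩

end Gradient

theorem generalized_snell_law_general
    (φ ψ : EuclideanSpace ℝ (Fin 3) → ℝ)
    (hφ : ContDiff ℝ 1 φ) (hψ : Differentiable ℝ ψ)
    (n₁ n₂ : ℝ)
    (A B P : EuclideanSpace ℝ (Fin 3))
    (hPA : P ≠ A) (hPB : P ≠ B)
    (hP : φ P = 0) (hgradφ : gradient φ P ≠ 0)
    (hext : IsLocalExtrOn
      (fun Q => n₁ * ‖Q - A‖ + n₂ * ‖B - Q‖ - ψ Q) {Q | φ Q = 0} P) :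
    ∃ l : ℝ,
      n₁ • (‖P - A‖⁻¹ • (P - A)) - n₂ • (‖B - P‖⁻¹ • (B - P)) - gradient ψ P
        = l • gradient φ P := by
  have hB : HasGradientAt (fun Q => ‖B - Q‖) (-(‖B - P‖⁻¹ • (B - P))) P := by
    simpa only [norm_sub_rev _ B, ← smul_neg, neg_sub] using hasGradientAt_norm_sub hPB
  have hobj := (((hasGradientAt_norm_sub hPA).const_mul n₁).add (hB.const_mul n₂)).sub
    (hψ P).hasGradientAt
  rw [smul_neg, ← sub_eq_add_neg] at hobj
  rw [← hP] at hext
  exact hext.exists_eq_smul_gradient hφ.contDiffAt hgradφ hobj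

/-- Generalized Snell's law via Lagrange multipliers: if `P` (with
`φ(P) = 0`, `∇φ(P) ≠ 0`) is a local extremum of
`Q ↦ n₁|Q − A| + n₂|B − Q| − ψ(Q)` restricted to the level surface `{φ = 0}`, then,
with `𝐱 = (P − A)/|P − A|` and `𝐦 = (B − P)/|B − P|`, the vector
`n₁𝐱 − n₂𝐦 − ∇ψ(P)` is parallel to `∇φ(P)`: there exists `λ ∈ ℝ` with
`n₁𝐱 − n₂𝐦 − ∇ψ(P) = λ∇φ(P)` (equivalently, their cross product vanishes). -/
theorem generalized_snell_law
    (φ ψ : EuclideanSpace ℝ (Fin 3) → ℝ)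
    (hφ : ContDiff ℝ 1 φ) (hψ : Differentiable ℝ ψ)
    (n₁ n₂ : ℝ) (hn₁ : 0 < n₁) (hn₂ : 0 < n₂)
    (A B P : EuclideanSpace ℝ (Fin 3))
    (hPA : P ≠ A) (hPB : P ≠ B)
    (hP : φ P = 0) (hgradφ : gradient φ P ≠ 0)
    (hext : IsLocalExtrOn
      (fun Q => n₁ * ‖Q - A‖ + n₂ * ‖B - Q‖ - ψ Q) {Q | φ Q = 0} P) :
    ∃ l : ℝ,
      n₁ • (‖P - A‖⁻¹ • (P - A)) - n₂ • (‖B - P‖⁻¹ • (B - P)) - gradient ψ P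
        = l • gradient φ P :=
  generalized_snell_law_general φ ψ hφ hψ n₁ n₂ A B P hPA hPB hP hgradφ hext
end

section
/- (Algebraic form of the refraction law at the first metasurface.) Let p, T ∈ ℝ², let F ∈ ℝ and w ∈ ℝ² denote the value f(p) and gradient ∇f(p) of a differentiable function f at p, let β ∈ ℝ with β > F, let e = (e₁, e₂, e₃) ∈ ℝ³, let n₁, n₂ > 0, and let Φ = (Φ₁, Φ₂, Φ₃) ∈ ℝ³ satisfy the tangentiality condition Φ₃ = Φ₁ w₁ + Φ₂ w₂. Set c = √((β − F)² + |T − p|²) and 𝐦 = (T − p, β − F)/c ∈ ℝ³, and suppose there exists λ ∈ ℝ with n₁ e − n₂ 𝐦 = λ (−w, 1) + Φ. Then (T − p + (β − F) w)/c = −(1/n₂)(Id + w⊗w)(Φ₁, Φ₂) + (n₁/n₂) e₃ w + (n₁/n₂)(e₁, e₂), and consequently (Φ₁, Φ₂) = (Id − (w⊗w)/(1 + |w|²)) ( −n₂ (T − p + (β − F) w)/c + n₁ e₃ w + n₁ (e₁, e₂) ). -/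
open scoped RealInnerProductSpace

/-- Algebraic form of the refraction law at the first metasurface:
points of ℝ³ are encoded as pairs `(·,·) : ℝ² × ℝ`.  Here `F = f(p)`, `w = ∇f(p)`,
`β > F`, `c = √((β − F)² + |T − p|²)`, `𝐦 = (T − p, β − F)/c`, the phase vector
`Φ = (Φ₁₂, Φ₃)` is tangential (`Φ₃ = Φ₁w₁ + Φ₂w₂ = ⟪Φ₁₂, w⟫`), and the generalized Snell
law `n₁e − n₂𝐦 = λ(−w,1) + Φ` holds for some `λ`.  Then
`(T − p + (β − F)w)/c = −(1/n₂)(Id + w⊗w)Φ₁₂ + (n₁/n₂)e₃w + (n₁/n₂)(e₁,e₂)` and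
`Φ₁₂ = (Id − (w⊗w)/(1 + |w|²))(−n₂(T − p + (β − F)w)/c + n₁e₃w + n₁(e₁,e₂))`,
where `(w⊗w)z = ⟪w,z⟫w`. -/
theorem refraction_first_metasurface
    (p T w : EuclideanSpace ℝ (Fin 2)) (F β : ℝ) (hβF : F < β)
    (e : EuclideanSpace ℝ (Fin 2) × ℝ)
    (n₁ n₂ : ℝ) (hn₁ : 0 < n₁) (hn₂ : 0 < n₂)
    (Φ : EuclideanSpace ℝ (Fin 2) × ℝ)
    (htan : Φ.2 = ⟪Φ.1, w⟫)
    (hsnell : ∃ l : ℝ,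
      n₁ • e - n₂ • (((Real.sqrt ((β - F) ^ 2 + ‖T - p‖ ^ 2))⁻¹ • (T - p),
          (β - F) / Real.sqrt ((β - F) ^ 2 + ‖T - p‖ ^ 2)) :
            EuclideanSpace ℝ (Fin 2) × ℝ)
        = l • ((-w, (1 : ℝ)) : EuclideanSpace ℝ (Fin 2) × ℝ) + Φ) :
    (Real.sqrt ((β - F) ^ 2 + ‖T - p‖ ^ 2))⁻¹ • (T - p + (β - F) • w)
      = (-(1 / n₂)) • (Φ.1 + ⟪w, Φ.1⟫ • w) + (n₁ / n₂ * e.2) • w + (n₁ / n₂) • e.1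
    ∧ Φ.1
      = ((-n₂) • ((Real.sqrt ((β - F) ^ 2 + ‖T - p‖ ^ 2))⁻¹ • (T - p + (β - F) • w))
          + (n₁ * e.2) • w + n₁ • e.1)
        - (⟪w, (-n₂) • ((Real.sqrt ((β - F) ^ 2 + ‖T - p‖ ^ 2))⁻¹ • (T - p + (β - F) • w))
              + (n₁ * e.2) • w + n₁ • e.1⟫ / (1 + ‖w‖ ^ 2)) • w := by
  obtain ⟨l, hsnell⟩ := hsnell
  set c := Real.sqrt ((β - F) ^ 2 + ‖T - p‖ ^ 2) with hc
  have hcpos : 0 < c := Real.sqrt_pos.mpr (by have h := sub_pos.mpr hβF; positivity)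
  have h1 := congrArg Prod.fst hsnell
  have h2 := congrArg Prod.snd hsnell
  simp only [Prod.fst_sub, Prod.smul_fst, Prod.fst_add, Prod.snd_sub, Prod.smul_snd,
    Prod.snd_add, smul_eq_mul] at h1 h2
  have hiww : ⟪w, Φ.1⟫ = ⟪Φ.1, w⟫ := real_inner_comm _ _
  have hn : n₂ ≠ 0 := hn₂.ne'
  have g1 : c⁻¹ • (T - p + (β - F) • w)
      = (-(1 / n₂)) • (Φ.1 + ⟪w, Φ.1⟫ • w) + (n₁ / n₂ * e.2) • w + (n₁ / n₂) • e.1 := by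
    have key : n₂ • (c⁻¹ • (T - p + (β - F) • w))
        = -(Φ.1 + ⟪w, Φ.1⟫ • w) + (n₁ * e.2) • w + n₁ • e.1 := by
      rw [hiww, ← htan]
      linear_combination (norm := module) (-1 : ℝ) • h1 - h2 • w
    calc c⁻¹ • (T - p + (β - F) • w)
        = n₂⁻¹ • (n₂ • (c⁻¹ • (T - p + (β - F) • w))) := (inv_smul_smul₀ hn _).symm
      _ = n₂⁻¹ • (-(Φ.1 + ⟪w, Φ.1⟫ • w) + (n₁ * e.2) • w + n₁ • e.1) := by rw [key]
      _ = (-(1 / n₂)) • (Φ.1 + ⟪w, Φ.1⟫ • w) + (n₁ / n₂ * e.2) • w + (n₁ / n₂) • e.1 := by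
          match_scalars <;> field_simp
  refine ⟨g1, ?_⟩
  rw [g1]
  have hinner : ⟪w, (-n₂) • ((-(1 / n₂)) • (Φ.1 + ⟪w, Φ.1⟫ • w) + (n₁ / n₂ * e.2) • w + (n₁ / n₂) • e.1)
      + (n₁ * e.2) • w + n₁ • e.1⟫ = ⟪w, Φ.1⟫ * (1 + ‖w‖ ^ 2) := by
    simp only [inner_add_right, inner_smul_right, real_inner_self_eq_norm_sq]
    field_simp
    ring
  rw [hinner]
  have h1w : (1 : ℝ) + ‖w‖ ^ 2 ≠ 0 := by positivity
  match_scalars <;> field_simp <;> ring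
end

section
/- (Algebraic form of the refraction law at the second metasurface.) Let p, q ∈ ℝ², let F ∈ ℝ be the value f(p) of a function f at p, let G ∈ ℝ and w ∈ ℝ² denote the value g(q) and gradient ∇g(q) of a differentiable function g at q, with G > F, let n₂, n₃ > 0, and let Ψ = (Ψ₁, Ψ₂, Ψ₃) ∈ ℝ³ satisfy the tangentiality condition Ψ₃ = Ψ₁ w₁ + Ψ₂ w₂. Set c = √((G − F)² + |q − p|²) and 𝐦 = (q − p, G − F)/c ∈ ℝ³, and suppose there exists λ ∈ ℝ with n₂ 𝐦 − n₃ (0, 0, 1) = λ (−w, 1) + Ψ. Then (q − p + (G − F) w)/c = (1/n₂)(Id + w⊗w)(Ψ₁, Ψ₂) + (n₃/n₂) w, and consequently (Ψ₁, Ψ₂) = (Id − (w⊗w)/(1 + |w|²)) ( n₂ (q − p + (G − F) w)/c − n₃ w ). -/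
open scoped RealInnerProductSpace

/-- Algebraic form of the refraction law at the second metasurface:
points of ℝ³ are encoded as pairs `(·,·) : ℝ² × ℝ`.  Here `F = f(p)`, `G = g(q)`,
`w = ∇g(q)`, `G > F`, `c = √((G − F)² + |q − p|²)`, `𝐦 = (q − p, G − F)/c`, the phase
vector `Ψ = (Ψ₁₂, Ψ₃)` is tangential (`Ψ₃ = Ψ₁w₁ + Ψ₂w₂ = ⟪Ψ₁₂, w⟫`), and the generalized
Snell law `n₂𝐦 − n₃(0,0,1) = λ(−w,1) + Ψ` holds for some `λ`.  Then
`(q − p + (G − F)w)/c = (1/n₂)(Id + w⊗w)Ψ₁₂ + (n₃/n₂)w` and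
`Ψ₁₂ = (Id − (w⊗w)/(1 + |w|²))(n₂(q − p + (G − F)w)/c − n₃w)`, where `(w⊗w)z = ⟪w,z⟫w`. -/
theorem refraction_second_metasurface
    (p q w : EuclideanSpace ℝ (Fin 2)) (F G : ℝ) (hGF : F < G)
    (n₂ n₃ : ℝ) (hn₂ : 0 < n₂) (hn₃ : 0 < n₃)
    (Ψ : EuclideanSpace ℝ (Fin 2) × ℝ)
    (htan : Ψ.2 = ⟪Ψ.1, w⟫)
    (hsnell : ∃ l : ℝ,
      n₂ • (((Real.sqrt ((G - F) ^ 2 + ‖q - p‖ ^ 2))⁻¹ • (q - p),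
          (G - F) / Real.sqrt ((G - F) ^ 2 + ‖q - p‖ ^ 2)) :
            EuclideanSpace ℝ (Fin 2) × ℝ)
        - n₃ • (((0 : EuclideanSpace ℝ (Fin 2)), (1 : ℝ)) :
            EuclideanSpace ℝ (Fin 2) × ℝ)
        = l • ((-w, (1 : ℝ)) : EuclideanSpace ℝ (Fin 2) × ℝ) + Ψ) :
    (Real.sqrt ((G - F) ^ 2 + ‖q - p‖ ^ 2))⁻¹ • (q - p + (G - F) • w)
      = (1 / n₂) • (Ψ.1 + ⟪w, Ψ.1⟫ • w) + (n₃ / n₂) • w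
    ∧ Ψ.1
      = (n₂ • ((Real.sqrt ((G - F) ^ 2 + ‖q - p‖ ^ 2))⁻¹ • (q - p + (G - F) • w))
          - n₃ • w)
        - (⟪w, n₂ • ((Real.sqrt ((G - F) ^ 2 + ‖q - p‖ ^ 2))⁻¹ • (q - p + (G - F) • w))
              - n₃ • w⟫ / (1 + ‖w‖ ^ 2)) • w := by
  obtain ⟨l, hs⟩ := hsnell
  set c := Real.sqrt ((G - F) ^ 2 + ‖q - p‖ ^ 2) with hc
  have hne : G - F ≠ 0 := sub_ne_zero.2 hGF.ne'
  have hcpos : 0 < c := Real.sqrt_pos.2 (by positivity)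
  have h1 : n₂ • (c⁻¹ • (q - p)) - n₃ • (0 : EuclideanSpace ℝ (Fin 2))
      = l • (-w) + Ψ.1 := congrArg Prod.fst hs
  have h2 : n₂ * ((G - F) / c) - n₃ * 1 = l * 1 + Ψ.2 := congrArg Prod.snd hs
  have hΨ : Ψ.1 = n₂ • (c⁻¹ • (q - p)) + l • w := by
    have := h1
    simp only [smul_zero, sub_zero, smul_neg] at this
    rw [this]; abel
  have ha : ⟪w, Ψ.1⟫ = n₂ * ((G - F) / c) - n₃ - l := by
    rw [real_inner_comm, ← htan]; linarith [h2]
  have first : c⁻¹ • (q - p + (G - F) • w)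
      = (1 / n₂) • (Ψ.1 + ⟪w, Ψ.1⟫ • w) + (n₃ / n₂) • w := by
    rw [ha, hΨ]
    match_scalars <;> field_simp <;> ring
  refine ⟨first, ?_⟩
  rw [first]
  have hinner : ⟪w, n₂ • ((1 / n₂) • (Ψ.1 + ⟪w, Ψ.1⟫ • w) + (n₃ / n₂) • w) - n₃ • w⟫
      = ⟪w, Ψ.1⟫ * (1 + ‖w‖ ^ 2) := by
    simp only [inner_sub_right, inner_add_right, inner_smul_right,
      real_inner_self_eq_norm_sq]
    field_simp
    ring
  rw [hinner]
  have hw1 : (1 + ‖w‖ ^ 2) ≠ 0 := by positivity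
  rw [mul_div_assoc, div_self hw1, mul_one]
  match_scalars <;> field_simp <;> ring
end
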